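/- arXiv:1108.5699 — 2 statements merged into one kernel-verified Lean document; each statement's English description precedes it below -/
import Mathlib

section
/- Let H be a twin-free finite simple graph and let k be a vector of positive integers indexed by V(H) that is invariant under every automorphism of H (i.e., k(σ(v)) = k(v) for all σ ∈ Aut(H) and v ∈ V(H)). Then for every positive integer h and every probability measure μ on V(H) with full support, s(H^(h·k); H^μ) ≤ s(H^(h·k); H^{μ_k}). -/
open Finset
open scoped Classical

def IsStrongHom {α β : Type} (H : SimpleGraph α) (G : SimpleGraph β) (φ : α → β) : Prop :=
  ∀ u v : α, H.Adj u v ↔ G.Adj (φ u) (φ v)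

def SimpleGraph.blowup {α : Type} (H : SimpleGraph α) (k : α → ℕ) :
    SimpleGraph (Σ v : α, Fin (k v)) where
  Adj x y := H.Adj x.1 y.1
  symm := ⟨fun _ _ h => H.adj_symm h⟩
  loopless := ⟨fun x h => H.irrefl h⟩

def IsWeight {β : Type} [Fintype β] (μ : β → ℝ) : Prop :=
  (∀ v, 0 < μ v) ∧ ∑ v, μ v = 1

noncomputable def sdensity {α β : Type} [Fintype α] [Fintype β]
    (H : SimpleGraph α) (G : SimpleGraph β) (μ : β → ℝ) : ℝ :=
  ∑ ψ : α → β, if IsStrongHom H G ψ then ∏ v : α, μ (ψ v) else 0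

def IsTwinFree {α : Type} (G : SimpleGraph α) : Prop :=
  ∀ u v : α, (∀ w, G.Adj u w ↔ G.Adj v w) → u = v

def WEquiv {α β : Type} [Fintype α] [Fintype β]
    (G1 : SimpleGraph α) (μ1 : α → ℝ) (G2 : SimpleGraph β) (μ2 : β → ℝ) : Prop :=
  ∃ (m : ℕ) (T : SimpleGraph (Fin m)) (π1 : α → Fin m) (π2 : β → Fin m),
    IsTwinFree T ∧ IsStrongHom G1 T π1 ∧ IsStrongHom G2 T π2 ∧
    Function.Surjective π1 ∧ Function.Surjective π2 ∧
    ∀ t : Fin m,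
      (∑ u ∈ Finset.univ.filter (fun u => π1 u = t), μ1 u) =
        ∑ u ∈ Finset.univ.filter (fun u => π2 u = t), μ2 u

noncomputable def d1dist {α β : Type} [Fintype α] [Fintype β]
    (G1 : SimpleGraph α) (μ1 : α → ℝ) (G2 : SimpleGraph β) (μ2 : β → ℝ) : ℝ :=
  sInf {x : ℝ | ∃ (m : ℕ) (F1 F2 : SimpleGraph (Fin m)) (μ : Fin m → ℝ),
    IsWeight μ ∧ WEquiv F1 μ G1 μ1 ∧ WEquiv F2 μ G2 μ2 ∧
    x = ∑ u : Fin m, ∑ v : Fin m, μ u * μ v *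
      |(if F1.Adj u v then (1:ℝ) else 0) - (if F2.Adj u v then (1:ℝ) else 0)|}

noncomputable def sdensityP {α β : Type} [Fintype α] [Fintype β]
    (H : SimpleGraph α) (u0 : α) (G : SimpleGraph β) (v0 : β) (μ : β → ℝ) : ℝ :=
  ∑ ψ : α → β, if ψ u0 = v0 ∧ IsStrongHom H G ψ
    then ∏ v ∈ Finset.univ.erase u0, μ (ψ v) else 0

def GraphBalanced {α : Type} [Fintype α] (H : SimpleGraph α) : Prop :=
  ∃ (m : ℕ) (Ht : SimpleGraph (Fin m)) (k : Fin m → ℕ),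
    (∀ v, 0 < k v) ∧ IsTwinFree Ht ∧ Nonempty (H ≃g Ht.blowup k) ∧
    ∀ σ : Ht ≃g Ht, ∀ v, k (σ v) = k v

/-!
A strong homomorphism from the blow-up `H^(m)` of a twin-free graph `H` to `H` is an
automorphism `σ` of `H` applied to the first coordinate. If `m` is invariant under `Aut(H)`, the
weight of such a map is therefore `∏ᵥ μ(v)^(m v)` for every `σ`. With `m = h·k` this is
`(∏ᵥ μ(v)^(k v))^h`, and weighted AM-GM shows that `∏ᵥ μ(v)^(k v)` is maximised over
probability vectors by `μ = μ_k`. The inequality therefore holds term by term in the sum defining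
`s(H^(h·k); H^μ)`.
-/

theorem Finset.prod_pow_le_prod_div_sum_pow {ι : Type*} [Fintype ι] (k : ι → ℕ)
    (hk : ∀ i, 0 < k i) (ν : ι → ℝ) (hν : ∀ i, 0 ≤ ν i) (hsum : ∑ i, ν i = 1) :
    ∏ i, ν i ^ k i ≤ ∏ i, ((k i : ℝ) / ∑ j, (k j : ℝ)) ^ k i := by
  have hne : (univ : Finset ι).Nonempty :=
    nonempty_of_sum_ne_zero (by rw [hsum]; exact one_ne_zero)
  set K : ℝ := ∑ j, (k j : ℝ)
  have hK : 0 < K := sum_pos (fun j _ => by exact_mod_cast hk j) hne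
  set w : ι → ℝ := fun i => (k i : ℝ) / K
  have hw : ∀ i, 0 < w i := fun i => div_pos (by exact_mod_cast hk i) hK
  have hz : ∀ i, 0 ≤ ν i / w i := fun i => div_nonneg (hν i) (hw i).le
  have amgm : ∏ i, (ν i / w i) ^ w i ≤ 1 :=
    calc ∏ i, (ν i / w i) ^ w i ≤ ∑ i, w i * (ν i / w i) :=
          Real.geom_mean_le_arith_mean_weighted univ w _ (fun i _ => (hw i).le)
            (by rw [← sum_div]; exact div_self hK.ne') fun i _ => hz i
      _ = 1 := by rw [← hsum]; exact sum_congr rfl fun i _ => mul_div_cancel₀ _ (hw i).ne'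
  have hquot : ∏ i, (ν i / w i) ^ k i ≤ 1 :=
    calc ∏ i, (ν i / w i) ^ k i = (∏ i, (ν i / w i) ^ w i) ^ K := by
          rw [← Real.finsetProd_rpow _ _ fun i _ => Real.rpow_nonneg (hz i) _]
          refine prod_congr rfl fun i _ => ?_
          rw [← Real.rpow_mul (hz i), div_mul_cancel₀ _ hK.ne', Real.rpow_natCast]
      _ ≤ 1 := Real.rpow_le_one (prod_nonneg fun i _ => Real.rpow_nonneg (hz i) _) amgm hK.le
  simp_rw [div_pow] at hquot
  rwa [prod_div_distrib, div_le_one (prod_pos fun i _ => pow_pos (hw i) _)] at hquot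

section StrongHom

variable {α β γ : Type} {H : SimpleGraph α} {G : SimpleGraph β}

theorem IsStrongHom.comp {K : SimpleGraph γ} {φ : α → β} {χ : β → γ}
    (hχ : IsStrongHom G K χ) (hφ : IsStrongHom H G φ) : IsStrongHom H K (χ ∘ φ) :=
  fun u v => (hφ u v).trans (hχ _ _)

theorem IsStrongHom.injective_of_isTwinFree {φ : α → β} (htf : IsTwinFree H)
    (hφ : IsStrongHom H G φ) : Function.Injective φ :=
  fun u v huv => htf u v fun w => by rw [hφ, hφ, huv]

theorem isStrongHom_blowup_sigmaMk (H : SimpleGraph α) (m : α → ℕ) (s : ∀ v, Fin (m v)) :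
    IsStrongHom H (H.blowup m) fun v => ⟨v, s v⟩ :=
  fun _ _ => Iff.rfl

theorem IsStrongHom.exists_iso_of_blowup [Finite α] (htf : IsTwinFree H) {m : α → ℕ}
    (hm : ∀ v, 0 < m v) {ψ : (Σ v, Fin (m v)) → α} (hψ : IsStrongHom (H.blowup m) H ψ) :
    ∃ σ : H ≃g H, ∀ x, ψ x = σ x.1 := by
  set f : α → α := fun v => ψ ⟨v, ⟨0, hm v⟩⟩
  have hf : IsStrongHom H H f := hψ.comp (isStrongHom_blowup_sigmaMk H m fun v => ⟨0, hm v⟩)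
  have hbij : Function.Bijective f :=
    Finite.injective_iff_bijective.mp (hf.injective_of_isTwinFree htf)
  refine ⟨⟨Equiv.ofBijective f hbij, fun {v w} => (hf v w).symm⟩,
    fun x => htf _ _ fun z => ?_⟩
  -- `ψ x` and `f x.1` are twins: both are adjacent to `f u` iff `x.1 ~ u`, and `f` is onto
  obtain ⟨u, rfl⟩ := hbij.2 z
  exact (hψ x ⟨u, ⟨0, hm u⟩⟩).symm.trans (hf x.1 u)

theorem Fintype.prod_sigma_fin_fst {M : Type*} [CommMonoid M] [Fintype α] (m : α → ℕ)
    (g : α → M) :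
    ∏ x : Σ v, Fin (m v), g x.1 = ∏ v, g v ^ m v := by
  simp [Fintype.prod_sigma]

theorem IsStrongHom.prod_comp_of_blowup {M : Type*} [CommMonoid M] [Fintype α]
    (htf : IsTwinFree H) {m : α → ℕ} (hm : ∀ v, 0 < m v)
    (hinv : ∀ σ : H ≃g H, ∀ v, m (σ v) = m v) {ψ : (Σ v, Fin (m v)) → α}
    (hψ : IsStrongHom (H.blowup m) H ψ) (ν : α → M) :
    ∏ x, ν (ψ x) = ∏ v, ν v ^ m v := by
  obtain ⟨σ, hσ⟩ := hψ.exists_iso_of_blowup htf hm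
  calc ∏ x, ν (ψ x) = ∏ v, ν (σ v) ^ m (σ v) := by
        simp_rw [hσ, hinv σ]; exact Fintype.prod_sigma_fin_fst m fun v => ν (σ v)
    _ = ∏ v, ν v ^ m v := σ.toEquiv.prod_comp fun v => ν v ^ m v

end StrongHom

theorem stmt10_general {α : Type} [Fintype α] (H : SimpleGraph α)
    (htf : IsTwinFree H) (k : α → ℕ) (hk : ∀ v, 0 < k v)
    (hinv : ∀ σ : H ≃g H, ∀ v, k (σ v) = k v)
    (h : ℕ) (hh : 0 < h) (μ : α → ℝ) (hμ : IsWeight μ) :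
    sdensity (H.blowup fun v => h * k v) H μ ≤
      sdensity (H.blowup fun v => h * k v) H (fun v => (k v : ℝ) / ∑ u : α, (k u : ℝ)) := by
  have hm : ∀ v, 0 < h * k v := fun v => Nat.mul_pos hh (hk v)
  have hminv : ∀ σ : H ≃g H, ∀ v, h * k (σ v) = h * k v := fun σ v => by rw [hinv σ v]
  refine sum_le_sum fun ψ _ => ?_
  split_ifs with hψ
  · have hprod : ∀ ν : α → ℝ, ∏ x, ν (ψ x) = (∏ v, ν v ^ k v) ^ h := fun ν => by
      rw [hψ.prod_comp_of_blowup htf hm hminv]; simp_rw [pow_mul', prod_pow]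
    refine (hprod μ).trans_le (.trans ?_ (hprod fun v => (k v : ℝ) / ∑ u, (k u : ℝ)).ge)
    exact pow_le_pow_left₀ (prod_nonneg fun v _ => pow_nonneg (hμ.1 v).le _)
      (prod_pow_le_prod_div_sum_pow k hk μ (fun v => (hμ.1 v).le) hμ.2) h
  · exact le_rfl

theorem stmt10 {α : Type} [Fintype α] [Nonempty α] (H : SimpleGraph α)
    (htf : IsTwinFree H) (k : α → ℕ) (hk : ∀ v, 0 < k v)
    (hinv : ∀ σ : H ≃g H, ∀ v, k (σ v) = k v)
    (h : ℕ) (hh : 0 < h) (μ : α → ℝ) (hμ : IsWeight μ) :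
    sdensity (H.blowup fun v => h * k v) H μ ≤
      sdensity (H.blowup fun v => h * k v) H (fun v => (k v : ℝ) / ∑ u : α, (k u : ℝ)) :=
  stmt10_general H htf k hk hinv h hh μ hμ
end

section
/- Let H be a twin-free finite simple graph and let k be a vector of positive integers indexed by V(H). Suppose there exists a positive integer h0 such that for every integer h ≥ h0, the function μ ↦ s(H^(h·k); H^μ) achieves a maximum over all probability measures μ on V(H) with full support at μ = μ_k. Then k is invariant under every automorphism of H, i.e., k(σ(v)) = k(v) for all σ ∈ Aut(H) and v ∈ V(H). -/
open Finset
open scoped Classical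

/-!
Twin-freeness makes every strong homomorphism `H^(m) → H` factor through a strong endomorphism
`f` of `H`, so `s(H^(h·k); H^μ) = ∑_f c_f(μ) ^ h` with `c_f(μ) = ∏_v μ(f v) ^ k(v)`. At an interior
maximiser `μ₀` every directional derivative along the simplex vanishes, which gives
`∑_f L_f c_f(μ₀) ^ h = 0` for all large `h`; since the sequences `h ↦ r ^ h` are linearly
independent, the coefficients `L_f` cancel on each level set of `f ↦ c_f(μ₀)`. In a suitable
direction `L_f` is a function of `c_f(μ₀)`, hence vanishes, and this says that
`∑_v k(v) log μ₀(f v)` does not depend on `f`. For `μ₀ = μ_k` and `f` an automorphism, Gibbs'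
inequality turns this into `k ∘ f = k`.
-/

open Real

section Blowup

theorem IsTwinFree.injective_of_isStrongHom {α β : Type} {H : SimpleGraph α} {G : SimpleGraph β}
    (hH : IsTwinFree H) {f : α → β} (hf : IsStrongHom H G f) : Function.Injective f :=
  fun u w hfuw => hH u w fun x => by rw [hf u x, hf w x, hfuw]

variable {α : Type} [Fintype α] {H : SimpleGraph α}

theorem IsStrongHom.blowup_apply_eq_apply_zero (hH : IsTwinFree H) {m : α → ℕ} (hm : ∀ v, 0 < m v)
    {ψ : (Σ v : α, Fin (m v)) → α} (hψ : IsStrongHom (H.blowup m) H ψ) (v : α) (i : Fin (m v)) :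
    ψ ⟨v, i⟩ = ψ ⟨v, ⟨0, hm v⟩⟩ := by
  let τ : α → α := fun w => ψ ⟨w, ⟨0, hm w⟩⟩
  have hτ : Function.Surjective τ :=
    Finite.surjective_of_injective <|
      hH.injective_of_isStrongHom fun u w => hψ ⟨u, ⟨0, hm u⟩⟩ ⟨w, ⟨0, hm w⟩⟩
  refine hH _ _ fun x => ?_
  obtain ⟨w, rfl⟩ := hτ x
  rw [← hψ, ← hψ]
  rfl

theorem sdensity_blowup_self (hH : IsTwinFree H) {m : α → ℕ} (hm : ∀ v, 0 < m v) (μ : α → ℝ) :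
    sdensity (H.blowup m) H μ = ∑ f ∈ {f | IsStrongHom H H f}, ∏ v, μ (f v) ^ m v := by
  rw [sdensity, ← sum_filter]
  refine sum_nbij' (fun ψ v => ψ ⟨v, ⟨0, hm v⟩⟩) (fun f x => f x.1) ?_ ?_ ?_ (fun _ _ => rfl) ?_
  · simp only [mem_filter, mem_univ, true_and]
    exact fun ψ hψ u w => hψ ⟨u, ⟨0, hm u⟩⟩ ⟨w, ⟨0, hm w⟩⟩
  · simp only [mem_filter, mem_univ, true_and]
    exact fun f hf x y => hf x.1 y.1
  · intro ψ hψ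
    funext x
    exact ((mem_filter.1 hψ).2.blowup_apply_eq_apply_zero hH hm x.1 x.2).symm
  · intro ψ hψ
    rw [← univ_sigma_univ, prod_sigma]
    refine prod_congr rfl fun v _ => ?_
    rw [prod_congr rfl fun i _ => by rw [(mem_filter.1 hψ).2.blowup_apply_eq_apply_zero hH hm v i],
      prod_const, card_univ, Fintype.card_fin]

end Blowup

theorem IsWeight.eventually_add_mul {β : Type} [Fintype β] {μ d : β → ℝ} (hμ : IsWeight μ)
    (hd : ∑ v, d v = 0) : ∀ᶠ t in nhds (0 : ℝ), IsWeight fun v => μ v + t * d v := by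
  refine (Filter.eventually_all.2 fun v => ?_).mono fun t ht =>
    ⟨ht, by rw [sum_add_distrib, ← mul_sum, hd, mul_zero, add_zero, hμ.2]⟩
  have : Filter.Tendsto (fun t : ℝ => μ v + t * d v) (nhds 0) (nhds (μ v)) := by
    simpa using ((continuous_id.mul continuous_const).const_add (μ v)).tendsto (0 : ℝ)
  exact this.eventually (lt_mem_nhds (hμ.1 v))

theorem hasDerivAt_prod_pow_add_mul {𝕜 ι : Type*} [NontriviallyNormedField 𝕜] (s : Finset ι)
    {a : ι → 𝕜} (ha : ∀ i ∈ s, a i ≠ 0) (b : ι → 𝕜) (e : ι → ℕ) :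
    HasDerivAt (fun t => ∏ i ∈ s, (a i + t * b i) ^ e i)
      ((∏ i ∈ s, a i ^ e i) * ∑ i ∈ s, e i * (b i / a i)) 0 := by
  have hd : DifferentiableAt 𝕜 (fun t => ∏ i ∈ s, (a i + t * b i) ^ e i) 0 := by fun_prop
  refine hd.hasDerivAt.congr_deriv ?_
  have h0 : ∏ i ∈ s, (a i + 0 * b i) ^ e i ≠ 0 :=
    prod_ne_zero_iff.2 fun i hi => pow_ne_zero _ (by simpa using ha i hi)
  rw [← mul_div_cancel₀ (deriv _ 0) h0, ← logDeriv_apply, logDeriv_prod]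
  · simp only [zero_mul, add_zero]
    congr 1
    refine sum_congr rfl fun i _ => ?_
    rw [logDeriv_fun_pow (by fun_prop), logDeriv_apply]
    simp
  · exact fun i hi => pow_ne_zero _ (by simpa using ha i hi)
  · fun_prop

theorem sum_mul_prod_pow_eq_zero_of_isMaxOn {α : Type} [Fintype α] {H : SimpleGraph α}
    (hH : IsTwinFree H) {k : α → ℕ} (hk : ∀ v, 0 < k v) {h : ℕ} (hh : 0 < h) {μ₀ : α → ℝ}
    (hμ₀ : IsWeight μ₀)
    (hmax : IsMaxOn (sdensity (H.blowup fun v => h * k v) H) {μ | IsWeight μ} μ₀)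
    {d : α → ℝ} (hd : ∑ v, d v = 0) :
    ∑ f ∈ {f | IsStrongHom H H f},
      (∑ v, k v * (d (f v) / μ₀ (f v))) * (∏ v, μ₀ (f v) ^ k v) ^ h = 0 := by
  have hhk : ∀ v, 0 < h * k v := fun v => Nat.mul_pos hh (hk v)
  set F : ℝ → ℝ := fun t => sdensity (H.blowup fun v => h * k v) H fun v => μ₀ v + t * d v
  have hF : IsLocalMax F 0 :=
    (hμ₀.eventually_add_mul hd).mono fun t ht => by simpa [F] using hmax ht
  have hF' : HasDerivAt F
      (∑ f ∈ {f | IsStrongHom H H f}, (∏ v, μ₀ (f v) ^ (h * k v)) *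
        ∑ v, ((h * k v : ℕ) : ℝ) * (d (f v) / μ₀ (f v))) 0 := by
    simp only [F, sdensity_blowup_self hH hhk]
    exact HasDerivAt.fun_sum fun f _ =>
      hasDerivAt_prod_pow_add_mul _ (fun v _ => (hμ₀.1 (f v)).ne') _ _
  have hzero := hF.hasDerivAt_eq_zero hF'
  simp only [pow_mul', prod_pow, Nat.cast_mul, mul_assoc, ← mul_sum] at hzero
  refine (mul_eq_zero.1 ?_).resolve_left (Nat.cast_ne_zero.2 hh.ne' : (h : ℝ) ≠ 0)
  rw [← hzero, mul_sum]
  exact sum_congr rfl fun f _ => by ring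

theorem eq_zero_of_forall_sum_mul_pow_eq_zero {K : Type*} [CommRing K] [IsDomain K]
    (s : Finset K) (a : K → K) (h : ∀ n : ℕ, ∑ r ∈ s, a r * r ^ n = 0) : ∀ r ∈ s, a r = 0 := by
  have hli : LinearIndependent K fun r : K => (powersHom K r : Multiplicative ℕ → K) :=
    (linearIndependent_monoidHom (Multiplicative ℕ) K).comp _ (powersHom K).injective
  refine linearIndependent_iff'.1 hli s a ?_
  funext n
  simpa using h n.toAdd

theorem eq_zero_of_forall_sum_comp_mul_pow_eq_zero {ι K : Type*} [Field K] [CharZero K]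
    {s : Finset ι} {c : ι → K} (hc : ∀ i ∈ s, c i ≠ 0) {g : K → K} {N : ℕ}
    (h : ∀ n, N ≤ n → ∑ i ∈ s, g (c i) * c i ^ n = 0) : ∀ i ∈ s, g (c i) = 0 := by
  have hfib := eq_zero_of_forall_sum_mul_pow_eq_zero (s.image c)
    (fun r => #{i ∈ s | c i = r} * g r * r ^ N) fun n => by
      rw [← h (N + n) (Nat.le_add_right N n),
        ← sum_fiberwise_of_maps_to' (fun i hi => mem_image_of_mem c hi) fun r => g r * r ^ (N + n)]
      refine sum_congr rfl fun r _ => ?_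
      rw [sum_const, nsmul_eq_mul, pow_add]
      ring
  intro i hi
  have hne : ({j ∈ s | c j = c i} : Finset ι).Nonempty := ⟨i, mem_filter.2 ⟨hi, rfl⟩⟩
  have hcard : (#{j ∈ s | c j = c i} : K) ≠ 0 := Nat.cast_ne_zero.2 (card_pos.2 hne).ne'
  simpa [hcard, hc i hi] using hfib (c i) (mem_image_of_mem c hi)

theorem sum_mul_log_lt_sum_mul_log {ι : Type*} [Fintype ι] {p q : ι → ℝ} (hp : ∀ i, 0 < p i)
    (hq : ∀ i, 0 < q i) (hpq : ∑ i, q i = ∑ i, p i) (hne : p ≠ q) :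
    ∑ i, p i * log (q i) < ∑ i, p i * log (p i) := by
  have hlog : ∀ i, p i * log (q i) - p i * log (p i) = p i * log (q i / p i) := fun i => by
    rw [log_div (hq i).ne' (hp i).ne']
    ring
  have hdiff : ∀ i, p i * (q i / p i - 1) = q i - p i := fun i => by
    field_simp [(hp i).ne']
  obtain ⟨j, hj⟩ := Function.ne_iff.1 hne
  have hlt : ∑ i, p i * log (q i / p i) < ∑ i, (q i - p i) := by
    refine sum_lt_sum (fun i _ => ?_) ⟨j, mem_univ j, ?_⟩
    · rw [← hdiff]
      exact mul_le_mul_of_nonneg_left (log_le_sub_one_of_pos (div_pos (hq i) (hp i))) (hp i).le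
    · rw [← hdiff]
      refine mul_lt_mul_of_pos_left (log_lt_sub_one_of_pos (div_pos (hq j) (hp j)) ?_) (hp j)
      rw [Ne, div_eq_one_iff_eq (hp j).ne']
      exact Ne.symm hj
  simp only [← hlog, sum_sub_distrib, hpq, sub_self] at hlt
  linarith

theorem sum_mul_log_comp_eq_of_isMaxOn {α : Type} [Fintype α] {H : SimpleGraph α}
    (hH : IsTwinFree H) {k : α → ℕ} (hk : ∀ v, 0 < k v) {μ₀ : α → ℝ} (hμ₀ : IsWeight μ₀)
    {h₀ : ℕ} (hh₀ : 0 < h₀)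
    (hmax : ∀ h : ℕ, h₀ ≤ h → IsMaxOn (sdensity (H.blowup fun v => h * k v) H) {μ | IsWeight μ} μ₀)
    {f : α → α} (hf : IsStrongHom H H f) :
    ∑ v, k v * log (μ₀ (f v)) = ∑ v, k v * log (μ₀ v) := by
  set ent := ∑ w, μ₀ w * log (μ₀ w)
  -- along `d` the first-order coefficient of `g` is `log (∏ v, μ₀ (g v) ^ k v)` minus a constant
  let d : α → ℝ := fun w => μ₀ w * (log (μ₀ w) - ent)
  have hd : ∑ w, d w = 0 := by
    simp only [d, mul_sub, sum_sub_distrib, ← sum_mul, hμ₀.2, one_mul]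
    exact sub_self ent
  have hlog : ∀ g : α → α, log (∏ v, μ₀ (g v) ^ k v) = ∑ v, k v * log (μ₀ (g v)) := fun g => by
    rw [log_prod fun v _ => pow_ne_zero _ (hμ₀.1 (g v)).ne']
    simp only [log_pow]
  have hdμ : ∀ w, d w / μ₀ w = log (μ₀ w) - ent := fun w => mul_div_cancel_left₀ _ (hμ₀.1 w).ne'
  have hcoef : ∀ g : α → α, ∑ v, k v * (d (g v) / μ₀ (g v)) =
      log (∏ v, μ₀ (g v) ^ k v) - (∑ v, (k v : ℝ)) * ent := fun g => by
    simp only [hdμ, mul_sub, sum_sub_distrib, hlog, sum_mul]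
  have hconst := eq_zero_of_forall_sum_comp_mul_pow_eq_zero
    (s := {g : α → α | IsStrongHom H H g}) (c := fun g => ∏ v, μ₀ (g v) ^ k v)
    (g := fun x => log x - (∑ v, (k v : ℝ)) * ent)
    (fun g _ => prod_ne_zero_iff.2 fun v _ => pow_ne_zero _ (hμ₀.1 (g v)).ne')
    fun h hh => by
      simpa only [hcoef] using
        sum_mul_prod_pow_eq_zero_of_isMaxOn hH hk (hh₀.trans_le hh) hμ₀ (hmax h hh) hd
  have hf' := hconst f (mem_filter.2 ⟨mem_univ f, hf⟩)
  have hid := hconst id (mem_filter.2 ⟨mem_univ id, fun _ _ => Iff.rfl⟩)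
  simp only [hlog, id] at hf' hid
  linarith

theorem stmt11_general {α : Type} [Fintype α] (H : SimpleGraph α)
    (htf : IsTwinFree H) (k : α → ℕ) (hk : ∀ v, 0 < k v)
    (hmax : ∃ h0 : ℕ, 0 < h0 ∧ ∀ h : ℕ, h0 ≤ h → ∀ μ : α → ℝ, IsWeight μ →
      sdensity (H.blowup fun v => h * k v) H μ ≤
        sdensity (H.blowup fun v => h * k v) H (fun v => (k v : ℝ) / ∑ u : α, (k u : ℝ))) :
    ∀ σ : H ≃g H, ∀ v, k (σ v) = k v := by
  obtain ⟨h₀, hh₀, hmax⟩ := hmax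
  intro σ v
  set n := ∑ u : α, (k u : ℝ)
  set μk : α → ℝ := fun v => (k v : ℝ) / n
  have hkpos : ∀ v, (0 : ℝ) < k v := fun v => Nat.cast_pos.2 (hk v)
  have hn : 0 < n := sum_pos (fun u _ => hkpos u) ⟨v, mem_univ v⟩
  have hμk : IsWeight μk := ⟨fun v => div_pos (hkpos v) hn, by rw [← sum_div, div_self hn.ne']⟩
  have hlog := sum_mul_log_comp_eq_of_isMaxOn htf hk hμk hh₀
    (fun h hh => isMaxOn_iff.2 (hmax h hh))
    (f := σ) fun _ _ => σ.map_adj_iff.symm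
  have hσ : μk = μk ∘ σ := by
    by_contra hne
    refine (sum_mul_log_lt_sum_mul_log hμk.1 (fun v => hμk.1 (σ v))
      (Equiv.sum_comp σ.toEquiv μk) hne).ne ?_
    simp only [μk, div_mul_eq_mul_div, ← sum_div, hlog]
  exact_mod_cast ((div_left_inj' hn.ne').1 (congrFun hσ v)).symm

theorem stmt11 {α : Type} [Fintype α] [Nonempty α] (H : SimpleGraph α)
    (htf : IsTwinFree H) (k : α → ℕ) (hk : ∀ v, 0 < k v)
    (hmax : ∃ h0 : ℕ, 0 < h0 ∧ ∀ h : ℕ, h0 ≤ h → ∀ μ : α → ℝ, IsWeight μ →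
      sdensity (H.blowup fun v => h * k v) H μ ≤
        sdensity (H.blowup fun v => h * k v) H (fun v => (k v : ℝ) / ∑ u : α, (k u : ℝ))) :
    ∀ σ : H ≃g H, ∀ v, k (σ v) = k v :=
  stmt11_general H htf k hk hmax
end
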